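/- arXiv:2510.05300 — 2 statements merged into one kernel-verified Lean document; each statement's English description precedes it below -/
import Mathlib

section
/- Let x : [0,t] → ℝ be càdlàg, s₁ < s₂ < ⋯ < s_m points of [0,t], and g : ℝ → ℝ continuous. Let (πₙ) be a sequence of partitions 0 = t₀ⁿ < ⋯ < t_{κₙ}ⁿ = t with mesh tending to 0. For n large enough, each s_j lies in exactly one interval (t_{τ(j)}ⁿ, t_{τ(j)+1}ⁿ], and ∑_{j=1}^m (g(x(t_{τ(j)+1}ⁿ)) − g(x(t_{τ(j)}ⁿ))) → ∑_{j=1}^m (g(x(s_j)) − g(x(s_j⁻))) as n → ∞. -/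
open Set Filter

private lemma strict_aux (f : ℕ → ℝ) (K : ℕ) (h : ∀ i < K, f i < f (i + 1)) :
    ∀ j, ∀ i < j, j ≤ K → f i < f j := by
  intro j
  induction j with
  | zero => intro i hi; omega
  | succ k ih =>
    intro i hi hk
    rcases Nat.lt_succ_iff_lt_or_eq.mp hi with h' | h'
    · exact (ih i h' (by omega)).trans (h k (by omega))
    · subst h'; exact h i (by omega)

private lemma mono_aux (f : ℕ → ℝ) (K : ℕ) (h : ∀ i < K, f i < f (i + 1)) :
    ∀ i j, i ≤ j → j ≤ K → f i ≤ f j := by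
  intro i j hij hK
  rcases eq_or_lt_of_le hij with rfl | h'
  · exact le_refl _
  · exact (strict_aux f K h j i h' hK).le

/-- Convergence of partition increments straddling finitely many fixed times: if `x` is
càdlàg on `[0, t]` with left limits `xm`, `g` is continuous, and `(πₙ)` is a sequence of
partitions of `[0, t]` with mesh tending to `0`, then for `n` large each point `s j` lies
in exactly one partition interval `(t^n_{τ j}, t^n_{τ j + 1}]`, and the sum of the
corresponding increments of `g ∘ x` converges to `∑ⱼ (g(x(sⱼ)) − g(x(sⱼ⁻)))`. -/
theorem stmt7 (t : ℝ) (ht : 0 < t) (x xm : ℝ → ℝ)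
    (hright : ∀ u ∈ Ico (0 : ℝ) t, Tendsto x (nhdsWithin u (Ici u)) (nhds (x u)))
    (hleft : ∀ u ∈ Ioc (0 : ℝ) t, Tendsto x (nhdsWithin u (Iio u)) (nhds (xm u)))
    (g : ℝ → ℝ) (hg : Continuous g)
    (m : ℕ) (s : Fin m → ℝ) (hs : StrictMono s) (hsmem : ∀ j, s j ∈ Ioc (0 : ℝ) t)
    (κ : ℕ → ℕ) (hκ : ∀ n, 0 < κ n) (tp : ℕ → ℕ → ℝ)
    (h0 : ∀ n, tp n 0 = 0) (hT : ∀ n, tp n (κ n) = t)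
    (hmono : ∀ n, ∀ i < κ n, tp n i < tp n (i + 1))
    (hmesh : ∀ δ > (0 : ℝ), ∃ N : ℕ, ∀ n ≥ N, ∀ i < κ n, tp n (i + 1) - tp n i < δ) :
    ∃ N : ℕ, ∃ τ : ℕ → Fin m → ℕ,
      (∀ n ≥ N, ∀ j : Fin m, τ n j < κ n ∧
        s j ∈ Ioc (tp n (τ n j)) (tp n (τ n j + 1)) ∧
        ∀ i < κ n, s j ∈ Ioc (tp n i) (tp n (i + 1)) → i = τ n j) ∧
      Tendsto (fun n => ∑ j : Fin m, (g (x (tp n (τ n j + 1))) - g (x (tp n (τ n j)))))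
        atTop (nhds (∑ j : Fin m, (g (x (s j)) - g (xm (s j))))) := by
  classical
  have hex : ∀ n (j : Fin m), ∃ i, s j ≤ tp n (i + 1) := by
    intro n j
    refine ⟨κ n - 1, ?_⟩
    have h1 : κ n - 1 + 1 = κ n := Nat.succ_pred_eq_of_pos (hκ n)
    rw [h1, hT n]; exact (hsmem j).2
  set τ : ℕ → Fin m → ℕ := fun n j => Nat.find (hex n j) with hτdef
  have hτlt : ∀ n (j : Fin m), τ n j < κ n := by
    intro n j
    have h1 : κ n - 1 + 1 = κ n := Nat.succ_pred_eq_of_pos (hκ n)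
    have h2 : τ n j ≤ κ n - 1 := Nat.find_le (by rw [h1, hT n]; exact (hsmem j).2)
    have := hκ n; omega
  have hτ1 : ∀ n (j : Fin m), s j ≤ tp n (τ n j + 1) := fun n j => Nat.find_spec (hex n j)
  have hτ0 : ∀ n (j : Fin m), tp n (τ n j) < s j := by
    intro n j
    rcases Nat.eq_zero_or_pos (τ n j) with h | h
    · rw [h, h0 n]; exact (hsmem j).1
    · obtain ⟨k, hk⟩ : ∃ k, τ n j = k + 1 := ⟨τ n j - 1, by omega⟩
      have := Nat.find_min (hex n j) (show k < τ n j by omega)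
      rw [hk]; exact not_le.mp this
  have huniq : ∀ n (j : Fin m), ∀ i < κ n, s j ∈ Ioc (tp n i) (tp n (i + 1)) → i = τ n j := by
    intro n j i hi hmem
    by_contra hne
    rcases lt_or_gt_of_ne hne with h | h
    · exact Nat.find_min (hex n j) h hmem.2
    · have : tp n (τ n j + 1) ≤ tp n i :=
        mono_aux (tp n) (κ n) (hmono n) (τ n j + 1) i h (by omega)
      have h4 := (hτ1 n j).trans this
      linarith [hmem.1]
  refine ⟨0, τ, fun n _ j => ⟨hτlt n j, ⟨hτ0 n j, hτ1 n j⟩, huniq n j⟩, ?_⟩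
  apply tendsto_finset_sum
  intro j _
  have hb : Tendsto (fun n => tp n (τ n j + 1)) atTop (nhds (s j)) := by
    rw [Metric.tendsto_atTop]
    intro ε hε
    obtain ⟨N, hN⟩ := hmesh ε hε
    refine ⟨N, fun n hn => ?_⟩
    have h1 := hτ1 n j
    have h2 := hτ0 n j
    have h3 := hN n hn (τ n j) (hτlt n j)
    rw [Real.dist_eq, abs_lt]; constructor <;> linarith
  have ha : Tendsto (fun n => tp n (τ n j)) atTop (nhds (s j)) := by
    rw [Metric.tendsto_atTop]
    intro ε hε
    obtain ⟨N, hN⟩ := hmesh ε hε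
    refine ⟨N, fun n hn => ?_⟩
    have h1 := hτ1 n j
    have h2 := hτ0 n j
    have h3 := hN n hn (τ n j) (hτlt n j)
    rw [Real.dist_eq, abs_lt]; constructor <;> linarith
  apply Tendsto.sub
  · -- right endpoint
    rcases eq_or_lt_of_le (hsmem j).2 with heq | hlt
    · have hbt : ∀ n, tp n (τ n j + 1) = t := by
        intro n
        refine le_antisymm ?_ ?_
        · have := mono_aux (tp n) (κ n) (hmono n) (τ n j + 1) (κ n) (hτlt n j) le_rfl
          rwa [hT n] at this
        · rw [← heq]; exact hτ1 n j
      simp only [hbt, heq]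
      exact tendsto_const_nhds
    · have hx := hright (s j) ⟨(hsmem j).1.le, hlt⟩
      have hb' : Tendsto (fun n => tp n (τ n j + 1)) atTop (nhdsWithin (s j) (Ici (s j))) :=
        tendsto_nhdsWithin_iff.mpr ⟨hb, Eventually.of_forall fun n => hτ1 n j⟩
      exact (hg.tendsto _).comp (hx.comp hb')
  · -- left endpoint
    have hx := hleft (s j) (hsmem j)
    have ha' : Tendsto (fun n => tp n (τ n j)) atTop (nhdsWithin (s j) (Iio (s j))) :=
      tendsto_nhdsWithin_iff.mpr ⟨ha, Eventually.of_forall fun n => hτ0 n j⟩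
    exact (hg.tendsto _).comp (hx.comp ha')
end

section
/- Let f, g, h, ℓ : [a,b] → ℝ≥0 with f and ℓ nonnegative and nondecreasing, g, h ∈ L¹([a,b]), and suppose f(t) ≤ ℓ(t) + ∫_a^t g(s) f(s) ds + (∫_a^t h(s) f(s)² ds)^{1/2} for all t ∈ [a,b], with f bounded. Then there is an explicit bound of the form f(t) ≤ C·ℓ(t)·exp(C'·(∫_a^b g + ∫_a^b h)) for absolute constants C, C' (e.g., f(b) ≤ 4 ℓ(b) e^{4∫g + 8∫h} when the data are constants as in the application). -/
open MeasureTheory intervalIntegral Set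

/-!
Since `f` is nondecreasing, `∫ₐᵗ h f² ≤ f t ∫ₐᵗ h f`, and AM-GM turns the square-root term into
`f t / 4 + ∫ₐᵗ h f`; absorbing `f t / 4` leaves the linear inequality `f ≤ L + ∫ₐᵗ φ f` with
`L = (4/3) ℓ`, `φ = (4/3)(g + h)`. For that one, monotonicity of `f` again gives
`∫ φ f ≤ f t / 2` on any interval where `∫ φ ≤ 1/2`, so `f ≤ 2 L` there. Cutting `[a, b]` into
`⌈2 ∫ₐᵇ φ⌉` such pieces and restarting at each cut point (the integral over the pieces already
passed is absorbed into the new forcing term `2 L`) doubles the bound per piece, which gives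
`f ≤ 2 ^ ⌈2 ∫ φ⌉ L ≤ L e ^ (2 ∫ φ + 1)`.
-/

theorem MeasureTheory.IntegrableOn.mul_monotoneOn {φ f : ℝ → ℝ} {a b : ℝ}
    (hφ : IntegrableOn φ (Icc a b)) (hf : MonotoneOn f (Icc a b)) :
    IntegrableOn (fun s => φ s * f s) (Icc a b) := by
  refine hφ.mul_bdd (aemeasurable_restrict_of_monotoneOn measurableSet_Icc hf).aestronglyMeasurable
    (c := max |f a| |f b|) (ae_restrict_of_forall_mem measurableSet_Icc fun s hs => ?_)
  have hab : a ≤ b := hs.1.trans hs.2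
  exact abs_le_max_abs_abs (hf (left_mem_Icc.2 hab) hs hs.1) (hf hs (right_mem_Icc.2 hab) hs.2)

theorem MeasureTheory.IntegrableOn.intervalIntegrable_of_mem {F : ℝ → ℝ} {a b c d : ℝ}
    (hF : IntegrableOn F (Icc a b)) (hc : c ∈ Icc a b) (hd : d ∈ Icc a b) :
    IntervalIntegrable F volume c d :=
  (hF.mono_set (uIcc_subset_Icc hc hd)).intervalIntegrable

section Gronwall

variable {φ f L : ℝ → ℝ} {a b : ℝ}

theorem integral_mul_le_mul_integral_of_monotoneOn (hab : a ≤ b)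
    (hφ0 : ∀ s ∈ Icc a b, 0 ≤ φ s) (hφ : IntervalIntegrable φ volume a b)
    (hφf : IntervalIntegrable (fun s => φ s * f s) volume a b) (hf : MonotoneOn f (Icc a b)) :
    ∫ s in a..b, φ s * f s ≤ f b * ∫ s in a..b, φ s := by
  rw [← intervalIntegral.integral_const_mul]
  refine integral_mono_on hab hφf (hφ.const_mul _) fun s hs => ?_
  rw [mul_comm (f b)]
  exact mul_le_mul_of_nonneg_left (hf hs (right_mem_Icc.2 hab) hs.2) (hφ0 s hs)

theorem exists_mem_Icc_integral_le_and_integral_le (hab : a ≤ b)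
    (hφ0 : ∀ s ∈ Icc a b, 0 ≤ φ s) (hφ : IntegrableOn φ (Icc a b)) {x y : ℝ}
    (hx : 0 ≤ x) (hy : 0 ≤ y) (hxy : ∫ s in a..b, φ s ≤ x + y) :
    ∃ c ∈ Icc a b, ∫ s in a..c, φ s ≤ x ∧ ∫ s in c..b, φ s ≤ y := by
  have hΦ : ContinuousOn (fun t => ∫ s in a..t, φ s) (Icc a b) := by
    simpa [uIcc_of_le hab] using continuousOn_primitive_interval (a := a) (b := b)
      (by rwa [uIcc_of_le hab])
  have hmem : min (∫ s in a..b, φ s) x ∈ Icc (∫ s in a..a, φ s) (∫ s in a..b, φ s) := by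
    rw [integral_same]
    exact ⟨le_min (integral_nonneg hab hφ0) hx, min_le_left _ _⟩
  obtain ⟨c, hc, hΦc⟩ := intermediate_value_Icc hab hΦ hmem
  refine ⟨c, hc, hΦc.trans_le (min_le_right _ _), ?_⟩
  have hsub := integral_interval_sub_left
    (hφ.intervalIntegrable_of_mem (left_mem_Icc.2 hab) (right_mem_Icc.2 hab))
    (hφ.intervalIntegrable_of_mem (left_mem_Icc.2 hab) hc)
  simp only at hΦc
  rw [← hsub, hΦc]
  cases min_cases (∫ s in a..b, φ s) x <;> linarith

theorem integral_mul_le_of_integral_le (hab : a ≤ b)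
    (hφ0 : ∀ s ∈ Icc a b, 0 ≤ φ s) (hφ : IntegrableOn φ (Icc a b))
    (hf0 : ∀ s ∈ Icc a b, 0 ≤ f s) (hf : MonotoneOn f (Icc a b)) {δ : ℝ}
    (hδ : ∫ s in a..b, φ s ≤ δ) {t : ℝ} (ht : t ∈ Icc a b) :
    ∫ s in a..t, φ s * f s ≤ δ * f t := by
  have ha := left_mem_Icc.2 hab
  have hat : Icc a t ⊆ Icc a b := Icc_subset_Icc_right ht.2
  calc ∫ s in a..t, φ s * f s
      ≤ f t * ∫ s in a..t, φ s :=
        integral_mul_le_mul_integral_of_monotoneOn ht.1 (fun s hs => hφ0 s (hat hs))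
          (hφ.intervalIntegrable_of_mem ha ht)
          ((hφ.mul_monotoneOn hf).intervalIntegrable_of_mem ha ht) (hf.mono hat)
    _ ≤ f t * ∫ s in a..b, φ s := by
        gcongr
        · exact hf0 t ht
        · exact integral_mono_interval le_rfl ht.1 ht.2
            (ae_restrict_of_forall_mem measurableSet_Ioc fun s hs => hφ0 s ⟨hs.1.le, hs.2⟩)
            (hφ.intervalIntegrable_of_mem ha (right_mem_Icc.2 hab))
    _ ≤ δ * f t := by rw [mul_comm]; exact mul_le_mul_of_nonneg_right hδ (hf0 t ht)

theorem le_two_pow_mul_of_le_add_integral (n : ℕ) (hab : a ≤ b)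
    (hφ0 : ∀ s ∈ Icc a b, 0 ≤ φ s) (hφ : IntegrableOn φ (Icc a b))
    (hf0 : ∀ s ∈ Icc a b, 0 ≤ f s) (hf : MonotoneOn f (Icc a b))
    (hL0 : ∀ s ∈ Icc a b, 0 ≤ L s) (hL : MonotoneOn L (Icc a b))
    (hΦ : ∫ s in a..b, φ s ≤ n / 2)
    (hineq : ∀ t ∈ Icc a b, f t ≤ L t + ∫ s in a..t, φ s * f s) :
    ∀ t ∈ Icc a b, f t ≤ 2 ^ n * L t := by
  induction n generalizing a L with
  | zero =>
    intro t ht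
    have := integral_mul_le_of_integral_le hab hφ0 hφ hf0 hf (by simpa using hΦ) ht
    linarith [hineq t ht]
  | succ n ih =>
    obtain ⟨c, hc, hac, hcb⟩ := exists_mem_Icc_integral_le_and_integral_le hab hφ0 hφ
      (x := 1 / 2) (y := n / 2) (by norm_num) (by positivity) (by push_cast at hΦ; linarith)
    have hIcc : Icc a c ⊆ Icc a b := Icc_subset_Icc_right hc.2
    have hfirst : ∀ t ∈ Icc a c, f t ≤ 2 * L t := fun t ht => by
      have := integral_mul_le_of_integral_le hc.1 (fun s hs => hφ0 s (hIcc hs))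
        (hφ.mono_set hIcc) (fun s hs => hf0 s (hIcc hs)) (hf.mono hIcc) hac ht
      linarith [hineq t (hIcc ht)]
    have hIcc' : Icc c b ⊆ Icc a b := Icc_subset_Icc_left hc.1
    have hrestart : ∀ t ∈ Icc c b, f t ≤ 2 * L t + ∫ s in c..t, φ s * f s := fun t ht => by
      have hφf := hφ.mul_monotoneOn hf
      have hsplit := integral_add_adjacent_intervals
        (hφf.intervalIntegrable_of_mem (left_mem_Icc.2 hab) hc)
        (hφf.intervalIntegrable_of_mem hc (hIcc' ht))
      have := integral_mul_le_of_integral_le hc.1 (fun s hs => hφ0 s (hIcc hs))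
        (hφ.mono_set hIcc) (fun s hs => hf0 s (hIcc hs)) (hf.mono hIcc) hac (right_mem_Icc.2 hc.1)
      linarith [hineq t (hIcc' ht), hsplit, hfirst c (right_mem_Icc.2 hc.1), hL hc (hIcc' ht) ht.1]
    have hsecond := ih hc.2 (fun s hs => hφ0 s (hIcc' hs)) (hφ.mono_set hIcc')
      (fun s hs => hf0 s (hIcc' hs)) (hf.mono hIcc')
      (fun s hs => mul_nonneg zero_le_two (hL0 s (hIcc' hs)))
      (fun s hs t ht hst => mul_le_mul_of_nonneg_left (hL.mono hIcc' hs ht hst) zero_le_two)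
      hcb hrestart
    intro t ht
    rcases le_total t c with htc | hct
    · have h2n : (2 : ℝ) ≤ 2 ^ (n + 1) := le_self_pow₀ one_le_two n.succ_ne_zero
      nlinarith [hfirst t ⟨ht.1, htc⟩, hL0 t ht]
    · rw [pow_succ, mul_assoc]
      exact hsecond t ⟨hct, ht.2⟩

theorem le_mul_exp_of_le_add_integral (hab : a ≤ b)
    (hφ0 : ∀ s ∈ Icc a b, 0 ≤ φ s) (hφ : IntegrableOn φ (Icc a b))
    (hf0 : ∀ s ∈ Icc a b, 0 ≤ f s) (hf : MonotoneOn f (Icc a b))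
    (hL0 : ∀ s ∈ Icc a b, 0 ≤ L s) (hL : MonotoneOn L (Icc a b))
    (hineq : ∀ t ∈ Icc a b, f t ≤ L t + ∫ s in a..t, φ s * f s) :
    ∀ t ∈ Icc a b, f t ≤ L t * Real.exp (2 * (∫ s in a..b, φ s) + 1) := by
  have hΦ0 : 0 ≤ 2 * ∫ s in a..b, φ s := mul_nonneg zero_le_two (integral_nonneg hab hφ0)
  obtain ⟨n, hΦn, hnΦ⟩ : ∃ n : ℕ,
      2 * (∫ s in a..b, φ s) ≤ n ∧ (n : ℝ) ≤ 2 * (∫ s in a..b, φ s) + 1 :=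
    ⟨_, Nat.le_ceil _, (Nat.ceil_lt_add_one hΦ0).le⟩
  have hpow : (2 : ℝ) ^ n ≤ Real.exp (2 * (∫ s in a..b, φ s) + 1) :=
    calc (2 : ℝ) ^ n ≤ Real.exp 1 ^ n := pow_le_pow_left₀ zero_le_two Real.exp_one_gt_two.le n
      _ = Real.exp n := by rw [← Real.exp_nat_mul, mul_one]
      _ ≤ Real.exp (2 * (∫ s in a..b, φ s) + 1) := Real.exp_le_exp.2 hnΦ
  intro t ht
  calc f t ≤ 2 ^ n * L t := le_two_pow_mul_of_le_add_integral n hab hφ0 hφ hf0 hf hL0 hL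
        (by linarith) hineq t ht
    _ ≤ L t * Real.exp (2 * (∫ s in a..b, φ s) + 1) := by
        rw [mul_comm]; exact mul_le_mul_of_nonneg_left hpow (hL0 t ht)

theorem sqrt_integral_mul_sq_le (hab : a ≤ b)
    (hφ0 : ∀ s ∈ Icc a b, 0 ≤ φ s) (hφ : IntegrableOn φ (Icc a b))
    (hf0 : ∀ s ∈ Icc a b, 0 ≤ f s) (hf : MonotoneOn f (Icc a b))
    {t : ℝ} (ht : t ∈ Icc a b) :
    √(∫ s in a..t, φ s * f s ^ 2) ≤ f t / 4 + ∫ s in a..t, φ s * f s := by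
  have ha := left_mem_Icc.2 hab
  have hat : Icc a t ⊆ Icc a b := Icc_subset_Icc_right ht.2
  have hφf := hφ.mul_monotoneOn hf
  have hφf0 : ∀ s ∈ Icc a t, 0 ≤ φ s * f s := fun s hs =>
    mul_nonneg (hφ0 s (hat hs)) (hf0 s (hat hs))
  have hsq : ∫ s in a..t, φ s * f s ^ 2 ≤ f t * ∫ s in a..t, φ s * f s := by
    simp_rw [sq, ← mul_assoc]
    exact integral_mul_le_mul_integral_of_monotoneOn ht.1 hφf0
      (hφf.intervalIntegrable_of_mem ha ht)
      ((hφf.mul_monotoneOn hf).intervalIntegrable_of_mem ha ht) (hf.mono hat)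
  have hB0 : 0 ≤ ∫ s in a..t, φ s * f s := integral_nonneg ht.1 hφf0
  rw [Real.sqrt_le_left (by linarith [hf0 t ht])]
  nlinarith [sq_nonneg (f t / 4 - ∫ s in a..t, φ s * f s)]

theorem le_add_integral_of_le_add_integral_add_sqrt {ℓ g h : ℝ → ℝ} (hab : a ≤ b)
    (hg : IntegrableOn g (Icc a b))
    (hh0 : ∀ s ∈ Icc a b, 0 ≤ h s) (hh : IntegrableOn h (Icc a b))
    (hf0 : ∀ s ∈ Icc a b, 0 ≤ f s) (hf : MonotoneOn f (Icc a b))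
    (hineq : ∀ t ∈ Icc a b,
      f t ≤ ℓ t + (∫ s in a..t, g s * f s) + √(∫ s in a..t, h s * f s ^ 2)) :
    ∀ t ∈ Icc a b, f t ≤ 4 / 3 * ℓ t + ∫ s in a..t, 4 / 3 * (g s + h s) * f s := by
  intro t ht
  have ha := left_mem_Icc.2 hab
  have hsplit : ∫ s in a..t, 4 / 3 * (g s + h s) * f s =
      4 / 3 * ((∫ s in a..t, g s * f s) + ∫ s in a..t, h s * f s) := by
    rw [← integral_add ((hg.mul_monotoneOn hf).intervalIntegrable_of_mem ha ht)
      ((hh.mul_monotoneOn hf).intervalIntegrable_of_mem ha ht),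
      ← intervalIntegral.integral_const_mul]
    congr 1; ext s; ring
  linarith [hineq t ht, sqrt_integral_mul_sq_le hab hh0 hh hf0 hf ht]

end Gronwall

theorem stmt15_general (a b : ℝ) (hab : a ≤ b) (f ℓ g h : ℝ → ℝ)
    (hf0 : ∀ t ∈ Icc a b, 0 ≤ f t) (hfmono : MonotoneOn f (Icc a b))
    (hℓ0 : ∀ t ∈ Icc a b, 0 ≤ ℓ t) (hℓmono : MonotoneOn ℓ (Icc a b))
    (hg0 : ∀ t ∈ Icc a b, 0 ≤ g t) (hh0 : ∀ t ∈ Icc a b, 0 ≤ h t)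
    (hg : IntegrableOn g (Icc a b)) (hh : IntegrableOn h (Icc a b))
    (hineq : ∀ t ∈ Icc a b,
      f t ≤ ℓ t + (∫ s in a..t, g s * f s) + Real.sqrt (∫ s in a..t, h s * f s ^ 2)) :
    ∀ t ∈ Icc a b,
      f t ≤ 4 * ℓ t * Real.exp (4 * (∫ s in a..b, g s) + 8 * (∫ s in a..b, h s)) := by
  have ha := left_mem_Icc.2 hab
  have hb := right_mem_Icc.2 hab
  have hexp : Real.exp (2 * (∫ s in a..b, 4 / 3 * (g s + h s)) + 1) ≤
      3 * Real.exp (4 * (∫ s in a..b, g s) + 8 * (∫ s in a..b, h s)) := by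
    rw [intervalIntegral.integral_const_mul, integral_add (hg.intervalIntegrable_of_mem ha hb)
      (hh.intervalIntegrable_of_mem ha hb), Real.exp_add, mul_comm 3]
    gcongr
    · linarith [integral_nonneg (μ := volume) hab hg0, integral_nonneg (μ := volume) hab hh0]
    · exact Real.exp_one_lt_three.le
  intro t ht
  calc f t ≤ 4 / 3 * ℓ t * Real.exp (2 * (∫ s in a..b, 4 / 3 * (g s + h s)) + 1) :=
        le_mul_exp_of_le_add_integral hab
          (fun s hs => mul_nonneg (by norm_num) (add_nonneg (hg0 s hs) (hh0 s hs)))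
          ((hg.add hh).const_mul _) hf0 hfmono (fun s hs => mul_nonneg (by norm_num) (hℓ0 s hs))
          (fun s hs t ht hst => mul_le_mul_of_nonneg_left (hℓmono hs ht hst) (by norm_num))
          (le_add_integral_of_le_add_integral_add_sqrt hab hg hh0 hh hf0 hfmono hineq) t ht
    _ ≤ 4 / 3 * ℓ t * (3 * Real.exp (4 * (∫ s in a..b, g s) + 8 * (∫ s in a..b, h s))) := by
        gcongr; linarith [hℓ0 t ht]
    _ = 4 * ℓ t * Real.exp (4 * (∫ s in a..b, g s) + 8 * (∫ s in a..b, h s)) := by ring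

/-- Extended Gronwall lemma (case `p = 2`): if a bounded, nonnegative, nondecreasing
function `f` satisfies `f t ≤ ℓ t + ∫ₐᵗ g f + (∫ₐᵗ h f²)^{1/2}` with `ℓ` nonnegative
nondecreasing and `g, h` nonnegative integrable, then
`f t ≤ 4 ℓ t · exp(4 ∫ₐᵇ g + 8 ∫ₐᵇ h)` on `[a, b]`. -/
theorem stmt15 (a b : ℝ) (hab : a ≤ b) (f ℓ g h : ℝ → ℝ)
    (hf0 : ∀ t ∈ Icc a b, 0 ≤ f t) (hfmono : MonotoneOn f (Icc a b))
    (hℓ0 : ∀ t ∈ Icc a b, 0 ≤ ℓ t) (hℓmono : MonotoneOn ℓ (Icc a b))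
    (hg0 : ∀ t ∈ Icc a b, 0 ≤ g t) (hh0 : ∀ t ∈ Icc a b, 0 ≤ h t)
    (hg : IntegrableOn g (Icc a b)) (hh : IntegrableOn h (Icc a b))
    (M : ℝ) (hfbdd : ∀ t ∈ Icc a b, f t ≤ M)
    (hineq : ∀ t ∈ Icc a b,
      f t ≤ ℓ t + (∫ s in a..t, g s * f s) + Real.sqrt (∫ s in a..t, h s * f s ^ 2)) :
    ∀ t ∈ Icc a b,
      f t ≤ 4 * ℓ t * Real.exp (4 * (∫ s in a..b, g s) + 8 * (∫ s in a..b, h s)) :=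
  stmt15_general a b hab f ℓ g h hf0 hfmono hℓ0 hℓmono hg0 hh0 hg hh hineq
end
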